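/- Let N be an orchard complete binary L-network containing a pair of parallel edges h_i, h_e (two edges with the same tail u and head v). Then u belongs to some unresolved root component T of N, and both h_i and h_e lie in the admissible edge set adm(T). -/

import Mathlib

open scoped Classical

noncomputable section

/-! ## Tags, μ-vectors, cherry types -/

inductive Tag : Type
  | te | hy | rn | ie
deriving DecidableEq, Inhabited

/-- The four cherry types (r2), (r3), (d), (u). -/
inductive CT : Type
  | r2 | r3 | d | u
deriving DecidableEq, Inhabited

/-- The eight cherry kinds: tree/reticulate combined with the four types. -/
inductive CherryKind : Type
  | Tr2 | Tr3 | Td | Tu | Rr2 | Rr3 | Rd | Ru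
deriving DecidableEq, Inhabited

def CherryKind.isTree : CherryKind → Bool
  | .Tr2 | .Tr3 | .Td | .Tu => true
  | _ => false

def CherryKind.ct : CherryKind → CT
  | .Tr2 => .r2 | .Tr3 => .r3 | .Td => .d | .Tu => .u
  | .Rr2 => .r2 | .Rr3 => .r3 | .Rd => .d | .Ru => .u

/-- A simple μ-vector on `n` taxa: coordinate 0 counts paths to hybrid nodes,
coordinate `i.succ` counts paths to the leaf labelled `i`. -/
abbrev MuVec (n : ℕ) := Fin (n + 1) → ℕ

/-- A μ-entry: a multiset of (one or two) tagged simple μ-vectors. -/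
abbrev MuEntry (n : ℕ) := Multiset (MuVec n × Tag)

/-- An edge-based μ-representation: a multiset of μ-entries. -/
abbrev MuRep (n : ℕ) := Multiset (MuEntry n)

/-- Indicator μ-vector `δ_S`. -/
def dlt {n : ℕ} (s : Finset (Fin (n + 1))) : MuVec n := fun i => if i ∈ s then 1 else 0

/-! ## Semidirected multigraphs with labelled leaves -/

/-- A semidirected multigraph on vertex names `ℕ` and edge names `ℕ`;
`dir e = true` means `e` is directed from `tail e` to `head e`;
`dir e = false` means `e` is an undirected edge with endpoints `tail e`, `head e`.
Leaves may be labelled by taxa in `Fin n`. -/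
structure Net (n : ℕ) where
  V : Finset ℕ
  E : Finset ℕ
  tail : ℕ → ℕ
  head : ℕ → ℕ
  dir : ℕ → Bool
  lbl : ℕ → Option (Fin n)

namespace Net

variable {n : ℕ}

def indeg (N : Net n) (v : ℕ) : ℕ :=
  (N.E.filter (fun e => N.dir e = true ∧ N.head e = v)).card
def outdeg (N : Net n) (v : ℕ) : ℕ :=
  (N.E.filter (fun e => N.dir e = true ∧ N.tail e = v)).card
def undeg (N : Net n) (v : ℕ) : ℕ :=
  (N.E.filter (fun e => N.dir e = false ∧ (N.tail e = v ∨ N.head e = v))).card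
def deg (N : Net n) (v : ℕ) : ℕ := N.indeg v + N.outdeg v + N.undeg v

def IsRootNode (N : Net n) (v : ℕ) : Prop := v ∈ N.V ∧ N.indeg v = 0 ∧ N.undeg v = 0
def IsLeafNode (N : Net n) (v : ℕ) : Prop := v ∈ N.V ∧ N.outdeg v = 0 ∧ N.undeg v = 0
def IsHybrid (N : Net n) (v : ℕ) : Prop := 2 ≤ N.indeg v
def IsTreeNode (N : Net n) (v : ℕ) : Prop := N.indeg v ≤ 1

/-- Source of a step `(e, forward?)` of a semidirected walk. -/
def src (N : Net n) (s : ℕ × Bool) : ℕ := if s.2 then N.tail s.1 else N.head s.1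
/-- Destination of a step. -/
def dst (N : Net n) (s : ℕ × Bool) : ℕ := if s.2 then N.head s.1 else N.tail s.1

/-- A step is legal from `u`: the edge is in the graph, directed edges are
traversed forwards, and the step starts at `u`. -/
def stepOK (N : Net n) (u : ℕ) (s : ℕ × Bool) : Prop :=
  s.1 ∈ N.E ∧ (N.dir s.1 = true → s.2 = true) ∧ N.src s = u

/-- `chain N u p x`: `p` is a semidirected walk from `u` to `x`. -/
def chain (N : Net n) : ℕ → List (ℕ × Bool) → ℕ → Prop
  | u, [], x => u = x
  | u, s :: p, x => N.stepOK u s ∧ N.chain (N.dst s) p x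

/-- A semidirected path (walk without repeated vertices) from `u` to `x`. -/
def IsPath (N : Net n) (u x : ℕ) (p : List (ℕ × Bool)) : Prop :=
  u ∈ N.V ∧ N.chain u p x ∧ (u :: p.map N.dst).Nodup

def paths (N : Net n) (u x : ℕ) : Set (List (ℕ × Bool)) := {p | N.IsPath u x p}
def pathsAvoid (N : Net n) (u x : ℕ) (e : ℕ) : Set (List (ℕ × Bool)) :=
  {p | N.IsPath u x p ∧ e ∉ p.map Prod.fst}

/-- `m N u x` : the number of semidirected paths from `u` to `x`. -/
def m (N : Net n) (u x : ℕ) : ℕ := (N.paths u x).ncard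
/-- `mAvoid N u x e` : the number of semidirected paths from `u` to `x` avoiding `e`. -/
def mAvoid (N : Net n) (u x : ℕ) (e : ℕ) : ℕ := (N.pathsAvoid u x e).ncard

/-- One undirected edge joins `u` and `v`. -/
def ustep (N : Net n) (u v : ℕ) : Prop :=
  ∃ e ∈ N.E, N.dir e = false ∧
    ((N.tail e = u ∧ N.head e = v) ∨ (N.tail e = v ∧ N.head e = u))

/-- `u ~ v`: joined by a path consisting solely of undirected edges. -/
def UndirConn (N : Net n) : ℕ → ℕ → Prop := Relation.ReflTransGen N.ustep

/-- A semidirected cycle. -/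
def IsSDCycle (N : Net n) (p : List (ℕ × Bool)) : Prop :=
  ∃ u, p ≠ [] ∧ N.chain u p u ∧ (p.map N.dst).Nodup ∧ (p.map Prod.fst).Nodup

def Acyclic (N : Net n) : Prop := ∀ p, ¬ N.IsSDCycle p

/-- `x` is the leaf labelled `a`. -/
def HasLeaf (N : Net n) (a : Fin n) (x : ℕ) : Prop := x ∈ N.V ∧ N.lbl x = some a

/-- `N` is an `L`-network: a semidirected acyclic graph whose leaves are tree
nodes, with leaves injectively labelled. -/
structure IsLNetwork (N : Net n) : Prop where
  wfT : ∀ e ∈ N.E, N.tail e ∈ N.V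
  wfH : ∀ e ∈ N.E, N.head e ∈ N.V
  acyclic : N.Acyclic
  leavesTree : ∀ v, N.IsLeafNode v → N.IsTreeNode v
  lblV : ∀ v, v ∉ N.V → N.lbl v = none
  lblLeaf : ∀ v ∈ N.V, ((N.lbl v).isSome ↔ N.IsLeafNode v)
  lblInj : ∀ v ∈ N.V, ∀ w ∈ N.V, N.lbl v ≠ none → N.lbl v = N.lbl w → v = w

/-- Binary: roots of degree 0, 2 or 3; leaves of degree 0 or 1; other nodes of degree 3. -/
def IsBinary (N : Net n) : Prop :=
  ∀ v ∈ N.V,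
    (N.IsRootNode v → N.deg v = 0 ∨ N.deg v = 2 ∨ N.deg v = 3) ∧
    (N.IsLeafNode v → N.deg v = 0 ∨ N.deg v = 1) ∧
    (¬ N.IsRootNode v → ¬ N.IsLeafNode v → N.deg v = 3)

/-- The class of `v` under `~` is a singleton. -/
def TrivialClass (N : Net n) (v : ℕ) : Prop := ∀ w, N.UndirConn v w → w = v

/-- Complete: edges incident to leaves are directed (toward the leaves), and every
nontrivial class under `~` has in-degree 0 in the contraction `N/~`. -/
def IsComplete (N : Net n) : Prop :=
  (∀ e ∈ N.E, N.dir e = false → ¬ N.IsLeafNode (N.tail e) ∧ ¬ N.IsLeafNode (N.head e)) ∧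
  (∀ v ∈ N.V, ¬ N.TrivialClass v → ∀ e ∈ N.E, N.dir e = true → ¬ N.UndirConn (N.head e) v)

/-- The class `[v]` is a root of the contraction `N/~`: no directed edge points into it. -/
def IsRootClass (N : Net n) (v : ℕ) : Prop :=
  v ∈ N.V ∧ ∀ e ∈ N.E, N.dir e = true → ¬ N.UndirConn (N.head e) v

/-- `v` belongs to an unresolved root component. -/
def UnresolvedRC (N : Net n) (v : ℕ) : Prop :=
  N.IsRootClass v ∧ (¬ N.TrivialClass v ∨ N.deg v = 3)

/-- `e` belongs to the admissible edge set of the root component of `v0`. -/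
def AdmFor (N : Net n) (v0 e : ℕ) : Prop := e ∈ N.E ∧ N.UndirConn (N.tail e) v0

/-! ## μ-representation of a network -/

def Hybs (N : Net n) : Finset ℕ := N.V.filter (fun v => N.IsHybrid v)

def mToLbl (N : Net n) (v : ℕ) (a : Fin n) : ℕ :=
  ∑ x ∈ N.V.filter (fun x => N.lbl x = some a), N.m v x
def mToLblAvoid (N : Net n) (v : ℕ) (a : Fin n) (e : ℕ) : ℕ :=
  ∑ x ∈ N.V.filter (fun x => N.lbl x = some a), N.mAvoid v x e

/-- Numbers of paths from `v` to hybrids (coordinate 0) and to each leaf. -/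
def muFrom (N : Net n) (v : ℕ) : MuVec n :=
  fun i => Fin.cases (∑ h ∈ N.Hybs, N.m v h) (fun a => N.mToLbl v a) i

/-- Numbers of paths from `v` avoiding edge `e`. -/
def muAt (N : Net n) (e : ℕ) (v : ℕ) : MuVec n :=
  fun i => Fin.cases (∑ h ∈ N.Hybs, N.mAvoid v h e) (fun a => N.mToLblAvoid v a e) i

/-- The μ-entry of an edge. -/
def muEntryEdge (N : Net n) (e : ℕ) : MuEntry n :=
  if N.dir e = true then
    let t : Tag := if N.IsHybrid (N.head e) then Tag.hy else Tag.te
    if N.UnresolvedRC (N.tail e) then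
      ({(N.muAt e (N.head e), t),
        (fun i => N.muFrom (N.tail e) i - N.muAt e (N.tail e) i, Tag.ie)} : MuEntry n)
    else ({(N.muAt e (N.head e), t)} : MuEntry n)
  else
    ({(N.muAt e (N.head e), Tag.te), (N.muAt e (N.tail e), Tag.te)} : MuEntry n)

/-- One μ-entry per root component (indexed by the minimal representative). -/
def rootEntries (N : Net n) : MuRep n :=
  ((N.V.filter (fun v => N.IsRootClass v ∧ ∀ w ∈ N.V, N.UndirConn v w → v ≤ w)).val).map
    (fun v => ({(N.muFrom v, Tag.rn)} : MuEntry n))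

/-- The edge-based μ-representation of `N`. -/
def muRep (N : Net n) : MuRep n :=
  N.E.val.map (fun e => N.muEntryEdge e) + N.rootEntries

end Net

/-! ## Operations on μ-representations -/

variable {n : ℕ}

/-- Multiplicity of a simple μ-vector in a μ-representation: the number of
entries (with multiplicity) containing it. -/
def multVec (μs : MuRep n) (m : MuVec n) : ℕ :=
  μs.countP (fun ent => ∃ t, (m, t) ∈ ent)

def hasTagged (μs : MuRep n) (mt : MuVec n × Tag) : Prop := ∃ ent ∈ μs, mt ∈ ent

/-- The entry of a simple μ-vector (meaningful when its multiplicity is 1). -/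
def entryOf (μs : MuRep n) (m : MuVec n) : MuEntry n :=
  if h : ∃ ent ∈ μs, ∃ t, (m, t) ∈ ent then h.choose else 0

/-- The tag of a simple μ-vector (meaningful when its multiplicity is 1). -/
def tagOf (μs : MuRep n) (m : MuVec n) : Tag :=
  if hasTagged μs (m, Tag.rn) then Tag.rn
  else if hasTagged μs (m, Tag.ie) then Tag.ie
  else if hasTagged μs (m, Tag.te) then Tag.te
  else Tag.hy

/-- The tagged μ-vectors other than `m` in the entry of `m`. -/
def invParts (μs : MuRep n) (m : MuVec n) : MuEntry n :=
  (entryOf μs m).filter (fun mt => mt.1 ≠ m)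

def hasInv (μs : MuRep n) (m : MuVec n) : Prop := invParts μs m ≠ 0

/-- The inverse `m⁻¹` of `m` (meaningful when it exists). -/
def invVec (μs : MuRep n) (m : MuVec n) : MuVec n := ((invParts μs m).toList.headI).1

/-- `(a,b)` is a tree cherry of the μ-representation. -/
def MuTreeCherry (μs : MuRep n) (a b : Fin n) : Prop :=
  multVec μs (dlt ({a.succ, b.succ} : Finset (Fin (n + 1)))) = 1

/-- Type of a tree cherry of a μ-representation. -/
def muTreeType (μs : MuRep n) (a b : Fin n) : CT :=
  let mab := dlt ({a.succ, b.succ} : Finset (Fin (n + 1)))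
  match tagOf μs mab with
  | Tag.rn => CT.r2
  | Tag.ie => CT.r3
  | Tag.te =>
      if (¬ hasInv μs mab) ∨ (∃ mt ∈ invParts μs mab, mt.2 = Tag.ie) then CT.d else CT.u
  | Tag.hy => CT.u

/-- `(a,b)` is a reticulate cherry of the μ-representation. -/
def MuRetCherry (μs : MuRep n) (a b : Fin n) : Prop :=
  multVec μs (dlt ({0, a.succ} : Finset (Fin (n + 1)))) = 2 ∧
    (multVec μs (dlt ({0, a.succ, b.succ} : Finset (Fin (n + 1)))) = 1 ∨
      (multVec μs (dlt ({0, a.succ, b.succ} : Finset (Fin (n + 1)))) = 2 ∧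
        ∀ ent ∈ μs, ∀ t : Tag,
          (dlt ({0, a.succ, b.succ} : Finset (Fin (n + 1))), t) ∈ ent → t = Tag.ie))

/-- Type of a reticulate cherry of a μ-representation. -/
def muRetType (μs : MuRep n) (a b : Fin n) : CT :=
  let mab := dlt ({0, a.succ, b.succ} : Finset (Fin (n + 1)))
  if multVec μs mab = 2 then CT.r3
  else
    match tagOf μs mab with
    | Tag.rn => CT.r2
    | Tag.ie => CT.r3
    | Tag.te =>
        if (¬ hasInv μs mab) ∨ (∃ mt ∈ invParts μs mab, mt.2 = Tag.ie) then CT.d else CT.u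
    | Tag.hy => CT.u

/-- `δ_{0,a,b}⁻¹`, defined as `δ_{0,a}` in the multiplicity-2 (parallel) case. -/
def retInv (μs : MuRep n) (a b : Fin n) : MuVec n :=
  if multVec μs (dlt ({0, a.succ, b.succ} : Finset (Fin (n + 1)))) = 2 then
    dlt ({0, a.succ} : Finset (Fin (n + 1)))
  else invVec μs (dlt ({0, a.succ, b.succ} : Finset (Fin (n + 1))))

/-- The internal μ-entry of a reticulate cherry `(a,b)` with respect to `μs`. -/
def internalEntry (μs : MuRep n) (a b : Fin n) : MuEntry n :=
  let d0a := dlt ({0, a.succ} : Finset (Fin (n + 1)))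
  let d0ab := dlt ({0, a.succ, b.succ} : Finset (Fin (n + 1)))
  if multVec μs d0ab = 1 ∧
      ((¬ hasInv μs d0ab) ∨ (∃ mt ∈ invParts μs d0ab, mt.2 = Tag.ie)) then
    ({(d0a, Tag.hy)} : MuEntry n)
  else
    ({(d0a, Tag.hy), (fun i => d0ab i + retInv μs a b i - d0a i, Tag.ie)} : MuEntry n)

/-- Remove the whole entry of `m`. -/
def removeEntryOf (μs : MuRep n) (m : MuVec n) : MuRep n := μs.erase (entryOf μs m)

/-- Remove `m⁻¹` from the entry of `m` (keeping `m`). -/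
def removeInvOf (μs : MuRep n) (m : MuVec n) : MuRep n :=
  (μs.erase (entryOf μs m)) + {(entryOf μs m).filter (fun mt => mt.1 = m)}

/-- Remove `m` from its entry (keeping the rest of the entry). -/
def removeVecOf (μs : MuRep n) (m : MuVec n) : MuRep n :=
  (μs.erase (entryOf μs m)) + {(entryOf μs m).filter (fun mt => mt.1 ≠ m)}

def entryOfT (μs : MuRep n) (mt : MuVec n × Tag) : MuEntry n :=
  if h : ∃ ent ∈ μs, mt ∈ ent then h.choose else 0

/-- Remove one occurrence of the tagged μ-vector `mt` from some entry containing it. -/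
def removeTaggedOnce (μs : MuRep n) (mt : MuVec n × Tag) : MuRep n :=
  (μs.erase (entryOfT μs mt)) + {(entryOfT μs mt).erase mt}

/-- Change the tag of `m⁻¹` (within the entry of `m`) to `ie`. -/
def retagInvIe (μs : MuRep n) (m : MuVec n) : MuRep n :=
  let ent := entryOf μs m
  (μs.erase ent) +
    {ent.filter (fun mt => mt.1 = m) + (invParts μs m).map (fun mt => (mt.1, Tag.ie))}

/-- Change the tag of one occurrence of the tagged μ-vector `mt` to `t'`. -/
def retagTaggedTo (μs : MuRep n) (mt : MuVec n × Tag) (t' : Tag) : MuRep n :=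
  let ent := entryOfT μs mt
  (μs.erase ent) + {(ent.erase mt) + ({(mt.1, t')} : MuEntry n)}

/-- Apply `f` to every simple μ-vector of every entry. -/
def mapVecs (f : MuVec n → MuVec n) (μs : MuRep n) : MuRep n :=
  μs.map (fun ent => ent.map (fun mt => (f mt.1, mt.2)))

/-- `(m_0, m_a, m_b, …) ↦ (m_0, 0, m_b, …)`. -/
def zeroCoordA (a : Fin n) (m : MuVec n) : MuVec n :=
  fun i => if i = a.succ then 0 else m i

/-- `(m_0, m_a, m_b, …) ↦ (m_0 − m_a, m_a − m_b, m_b, …)`. -/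
def retAdj (a b : Fin n) (m : MuVec n) : MuVec n :=
  fun i => if i = 0 then m 0 - m a.succ else if i = a.succ then m a.succ - m b.succ else m i

/-- Reduction of a tree cherry `(a,b)` on a μ-representation. -/
def muReduceTree (μs : MuRep n) (a b : Fin n) : MuRep n :=
  let dab := dlt ({a.succ, b.succ} : Finset (Fin (n + 1)))
  let da := dlt ({a.succ} : Finset (Fin (n + 1)))
  let db := dlt ({b.succ} : Finset (Fin (n + 1)))
  let μ1 :=
    match muTreeType μs a b with
    | CT.r2 => removeEntryOf μs db
    | CT.d => removeEntryOf μs db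
    | CT.r3 => removeVecOf (removeInvOf μs db) dab
    | CT.u => retagInvIe (removeEntryOf μs db) dab
  let μ2 := removeEntryOf μ1 da
  mapVecs (zeroCoordA a) μ2

/-- Reduction of a reticulate cherry `(a,b)` on a μ-representation. -/
def muReduceRet (μs : MuRep n) (a b : Fin n) : MuRep n :=
  let d0a := dlt ({0, a.succ} : Finset (Fin (n + 1)))
  let d0ab := dlt ({0, a.succ, b.succ} : Finset (Fin (n + 1)))
  let da := dlt ({a.succ} : Finset (Fin (n + 1)))
  let db := dlt ({b.succ} : Finset (Fin (n + 1)))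
  let intEnt := internalEntry μs a b
  let μ1 :=
    match muRetType μs a b with
    | CT.r2 => removeEntryOf μs db
    | CT.d => removeEntryOf μs db
    | CT.r3 => removeTaggedOnce (removeInvOf μs db) (d0ab, Tag.ie)
    | CT.u => retagInvIe (removeEntryOf μs db) d0ab
  let μ2 := removeEntryOf μ1 da
  let μ3 := μ2.erase intEnt
  let μ4 := retagTaggedTo μ3 (d0a, Tag.hy) Tag.te
  mapVecs (retAdj a b) μ4

/-- Reduction of a cherry `(a,b)` on a μ-representation. -/
def muReduceCherry (μs : MuRep n) (a b : Fin n) : MuRep n :=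
  if MuTreeCherry μs a b then muReduceTree μs a b
  else if MuRetCherry μs a b then muReduceRet μs a b
  else μs

/-! ## Cherries and reductions on networks -/

namespace Net

/-- The node labelled `a` (meaningful when it exists). -/
def labelNode (N : Net n) (a : Fin n) : ℕ :=
  ((N.V.filter (fun x => N.lbl x = some a)).sort (· ≤ ·)).headI

def inEdges (N : Net n) (x : ℕ) : Finset ℕ :=
  N.E.filter (fun e => N.dir e = true ∧ N.head e = x)

/-- The parent of `x` (meaningful when `x` has in-degree 1). -/
def parentOf (N : Net n) (x : ℕ) : ℕ :=
  N.tail (((N.inEdges x).sort (· ≤ ·)).headI)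

def IsParentOf (N : Net n) (p x : ℕ) : Prop :=
  ∃ e ∈ N.E, N.dir e = true ∧ N.tail e = p ∧ N.head e = x

/-- `(a,b)` is a tree cherry of `N`. -/
def TreeCherry (N : Net n) (a b : Fin n) : Prop :=
  ∃ x y p, N.HasLeaf a x ∧ N.HasLeaf b y ∧ x ≠ y ∧ N.IsParentOf p x ∧ N.IsParentOf p y

/-- `(a,b)` is a reticulate cherry of `N`. -/
def RetCherry (N : Net n) (a b : Fin n) : Prop :=
  ∃ x y pa pb, N.HasLeaf a x ∧ N.HasLeaf b y ∧ x ≠ y ∧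
    N.IsParentOf pa x ∧ N.IsHybrid pa ∧ N.IsParentOf pb y ∧ N.IsParentOf pb pa

def IsCherry (N : Net n) (a b : Fin n) : Prop := N.TreeCherry a b ∨ N.RetCherry a b

/-- The type of a cherry `(a,b)`, read off from the parent of `b`. -/
def cherryType (N : Net n) (a b : Fin n) : CT :=
  let pb := N.parentOf (N.labelNode b)
  if N.IsRootNode pb ∧ N.deg pb = 2 then CT.r2
  else if N.IsRootNode pb ∧ N.deg pb = 3 then CT.r3
  else if 0 < N.undeg pb then CT.u
  else CT.d

def incE (N : Net n) (v : ℕ) : Finset ℕ :=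
  N.E.filter (fun e => N.tail e = v ∨ N.head e = v)

/-- A node is suppressible (Def. of node suppression). -/
def Suppressible (N : Net n) (v : ℕ) : Prop :=
  N.lbl v = none ∧
    ((N.deg v = 2 ∧ ¬ N.IsRootNode v) ∨
      (N.deg v = 1 ∧ N.IsRootNode v ∧ ∀ e ∈ N.incE v, ¬ N.IsHybrid (N.head e)))

/-- Replace the two edges `e1`, `e2` at `v` by the single edge (named `e1`)
from `p` to `c`, directed iff `d`. -/
def replaceEdge (N : Net n) (v e1 e2 p c : ℕ) (d : Bool) : Net n :=
  { V := N.V.erase v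
    E := N.E.erase e2
    tail := Function.update N.tail e1 p
    head := Function.update N.head e1 c
    dir := Function.update N.dir e1 d
    lbl := N.lbl }

/-- Suppress a (suppressible) node of degree 1 or 2. -/
def suppress (N : Net n) (v : ℕ) : Net n :=
  match (N.incE v).sort (· ≤ ·) with
  | [e] => { N with V := N.V.erase v, E := N.E.erase e }
  | [e1, e2] =>
      let o1 := if N.tail e1 = v then N.head e1 else N.tail e1
      let o2 := if N.tail e2 = v then N.head e2 else N.tail e2
      if N.dir e1 = true ∧ N.tail e1 = v then N.replaceEdge v e1 e2 o2 o1 true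
      else if N.dir e2 = true ∧ N.tail e2 = v then N.replaceEdge v e1 e2 o1 o2 true
      else if N.dir e1 = true then N.replaceEdge v e1 e2 o1 o2 true
      else if N.dir e2 = true then N.replaceEdge v e1 e2 o2 o1 true
      else N.replaceEdge v e1 e2 o1 o2 false
  | _ => N

def suppressIf (N : Net n) (v : ℕ) : Net n := if N.Suppressible v then N.suppress v else N

/-- Delete the leaf `x` and its incident edge(s). -/
def deleteLeaf (N : Net n) (x : ℕ) : Net n :=
  { V := N.V.erase x
    E := N.E \ N.incE x
    tail := N.tail
    head := N.head
    dir := N.dir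
    lbl := Function.update N.lbl x none }

/-- Reduction of a tree cherry `(a,b)`. -/
def reduceTree (N : Net n) (a b : Fin n) : Net n :=
  let x := N.labelNode a
  let p := N.parentOf x
  (N.deleteLeaf x).suppressIf p

/-- Reduction of a reticulate cherry `(a,b)`: delete the internal hybrid edge,
suppress `p_b` if suppressible, then suppress `p_a`. -/
def reduceRet (N : Net n) (a b : Fin n) : Net n :=
  let x := N.labelNode a
  let y := N.labelNode b
  let pa := N.parentOf x
  let pb := N.parentOf y
  let eint :=
    ((N.E.filter (fun e => N.dir e = true ∧ N.tail e = pb ∧ N.head e = pa)).sort (· ≤ ·)).headI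
  let N1 : Net n := { N with E := N.E.erase eint }
  ((N1.suppressIf pb).suppress pa)

/-- Reduction of the cherry `(a,b)` in `N`, written `N^{(a,b)}`. -/
def reduceCherry (N : Net n) (a b : Fin n) : Net n :=
  if N.TreeCherry a b then N.reduceTree a b
  else if N.RetCherry a b then N.reduceRet a b
  else N

def reduceSeq (N : Net n) (S : List (Fin n × Fin n)) : Net n :=
  S.foldl (fun M s => M.reduceCherry s.1 s.2) N

def IsRedSeq : Net n → List (Fin n × Fin n) → Prop
  | _, [] => True
  | N, s :: S => N.IsCherry s.1 s.2 ∧ IsRedSeq (N.reduceCherry s.1 s.2) S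

/-- `N` is the trivial forest on `L0`: isolated nodes labelled bijectively by `L0`. -/
def IsTrivialForest (N : Net n) (L0 : Finset (Fin n)) : Prop :=
  N.E = ∅ ∧ (∀ v ∈ N.V, ∃ a ∈ L0, N.lbl v = some a) ∧
    (∀ a ∈ L0, ∃ v ∈ N.V, N.lbl v = some a)

/-- `N` is orchard: some cherry reduction sequence reduces it to a trivial forest. -/
def Orchard (N : Net n) : Prop :=
  ∃ S L0, N.IsRedSeq S ∧ (N.reduceSeq S).IsTrivialForest L0

def freshV (N : Net n) : ℕ := N.V.sup id + 1
def freshE (N : Net n) : ℕ := N.E.sup id + 1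

/-- Addition of the cherry `(a,b)` of kind `k` to `N` (identity if conditions fail). -/
def addCherry (N : Net n) (a b : Fin n) (k : CherryKind) : Net n :=
  let y := N.labelNode b
  let w := N.parentOf y
  let ewb := ((N.inEdges y).sort (· ≤ ·)).headI
  let va := N.freshV
  let vpb := N.freshV + 1
  let e1 := N.freshE
  let e2 := N.freshE + 1
  let x := N.labelNode a
  let pa := N.parentOf x
  let isolated : Prop := y ∈ N.V ∧ N.deg y = 0 ∧ (N.lbl y).isSome
  let nonIsolated : Prop := y ∈ N.V ∧ N.deg y ≠ 0 ∧ (N.lbl y).isSome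
  let resolvedRoot : Prop := N.IsRootNode w ∧ N.deg w = 2
  let aLeaf : Prop := ∃ xx, N.HasLeaf a xx
  match k with
  | CherryKind.Tr2 =>
      if isolated then
        { V := insert vpb (insert va N.V)
          E := insert e2 (insert e1 N.E)
          tail := Function.update (Function.update N.tail e1 vpb) e2 vpb
          head := Function.update (Function.update N.head e1 va) e2 y
          dir := Function.update (Function.update N.dir e1 true) e2 true
          lbl := Function.update N.lbl va (some a) }
      else N
  | CherryKind.Tr3 =>
      if nonIsolated ∧ resolvedRoot then
        { V := insert va N.V
          E := insert e1 N.E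
          tail := Function.update N.tail e1 w
          head := Function.update N.head e1 va
          dir := Function.update N.dir e1 true
          lbl := Function.update N.lbl va (some a) }
      else N
  | CherryKind.Td =>
      if nonIsolated ∧ ¬ resolvedRoot then
        { V := insert vpb (insert va N.V)
          E := insert e2 (insert e1 N.E)
          tail := Function.update (Function.update N.tail e1 vpb) e2 vpb
          head :=
            Function.update (Function.update (Function.update N.head ewb vpb) e1 va) e2 y
          dir := Function.update (Function.update N.dir e1 true) e2 true
          lbl := Function.update N.lbl va (some a) }
      else N
  | CherryKind.Tu =>
      if nonIsolated ∧ ¬ resolvedRoot then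
        { V := insert vpb (insert va N.V)
          E := insert e2 (insert e1 N.E)
          tail := Function.update (Function.update N.tail e1 vpb) e2 vpb
          head :=
            Function.update (Function.update (Function.update N.head ewb vpb) e1 va) e2 y
          dir :=
            Function.update (Function.update (Function.update N.dir ewb false) e1 true) e2 true
          lbl := Function.update N.lbl va (some a) }
      else N
  | CherryKind.Rr2 =>
      if aLeaf ∧ isolated then
        { V := insert vpb N.V
          E := insert e2 (insert e1 N.E)
          tail := Function.update (Function.update N.tail e1 vpb) e2 vpb
          head := Function.update (Function.update N.head e1 pa) e2 y
          dir := Function.update (Function.update N.dir e1 true) e2 true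
          lbl := N.lbl }
      else N
  | CherryKind.Rr3 =>
      if aLeaf ∧ nonIsolated ∧ resolvedRoot then
        { V := N.V
          E := insert e1 N.E
          tail := Function.update N.tail e1 w
          head := Function.update N.head e1 pa
          dir := Function.update N.dir e1 true
          lbl := N.lbl }
      else N
  | CherryKind.Rd =>
      if aLeaf ∧ nonIsolated ∧ ¬ resolvedRoot then
        { V := insert vpb N.V
          E := insert e2 (insert e1 N.E)
          tail := Function.update (Function.update N.tail e1 vpb) e2 vpb
          head :=
            Function.update (Function.update (Function.update N.head ewb vpb) e1 pa) e2 y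
          dir := Function.update (Function.update N.dir e1 true) e2 true
          lbl := N.lbl }
      else N
  | CherryKind.Ru =>
      if aLeaf ∧ nonIsolated ∧ ¬ resolvedRoot then
        { V := insert vpb N.V
          E := insert e2 (insert e1 N.E)
          tail := Function.update (Function.update N.tail e1 vpb) e2 vpb
          head :=
            Function.update (Function.update (Function.update N.head ewb vpb) e1 pa) e2 y
          dir :=
            Function.update (Function.update (Function.update N.dir ewb false) e1 true) e2 true
          lbl := N.lbl }
      else N

/-- Isomorphism of leaf-labelled semidirected networks. -/
def Isom (N M : Net n) : Prop :=
  ∃ f g : ℕ → ℕ,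
    Set.InjOn f ↑N.V ∧ N.V.image f = M.V ∧
    Set.InjOn g ↑N.E ∧ N.E.image g = M.E ∧
    (∀ e ∈ N.E, M.dir (g e) = N.dir e) ∧
    (∀ e ∈ N.E, N.dir e = true →
      M.tail (g e) = f (N.tail e) ∧ M.head (g e) = f (N.head e)) ∧
    (∀ e ∈ N.E, N.dir e = false →
      (M.tail (g e) = f (N.tail e) ∧ M.head (g e) = f (N.head e)) ∨
        (M.tail (g e) = f (N.head e) ∧ M.head (g e) = f (N.tail e))) ∧
    (∀ v ∈ N.V, M.lbl (f v) = N.lbl v)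

/-- `N` is a (complete binary) `L`-network. -/
def Good (N : Net n) : Prop := N.IsLNetwork ∧ N.IsBinary ∧ N.IsComplete

/-- The edge-based μ-dissimilarity: size of the symmetric difference of the
multisets of μ-entries. -/
def dmu (N M : Net n) : ℕ := ((N.muRep - M.muRep) + (M.muRep - N.muRep)).card

/-- `(a,b)` is a reticulate cherry of `N` whose internal and external hybrid
edges are parallel. -/
def ParallelRet (N : Net n) (a b : Fin n) : Prop :=
  ∃ x y pa pb hi he, N.HasLeaf a x ∧ N.HasLeaf b y ∧
    N.IsParentOf pa x ∧ N.IsHybrid pa ∧ N.IsParentOf pb y ∧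
    hi ≠ he ∧ hi ∈ N.E ∧ he ∈ N.E ∧ N.dir hi = true ∧ N.dir he = true ∧
    N.tail hi = pb ∧ N.head hi = pa ∧ N.tail he = pb ∧ N.head he = pa

end Net

/-!
If the class of `u` under `~` is nontrivial, completeness makes it a root component, and `hᵢ, hₑ`
are admissible because both leave `u`. So assume `u` is alone in its class. Binarity then makes
`u` either a root of degree 3, that is, an unresolved root component, or a node whose only
out-edges are `hᵢ` and `hₑ`. The second case is impossible in an orchard network, because such a
pair is never touched by a cherry reduction: `u` has no labelled child, so it is never the parent
of a cherry leaf, and when `v` is such a parent it still meets `hᵢ`, `hₑ` and the edge to the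
leaf, so it is not suppressed. Hence `hᵢ` survives every reduction sequence, whereas an orchard
network reduces to an edgeless forest. `Net.StuckPair` is the invariant that carries this
through the reductions; `Net.WellFormed` collects what it needs from an `L`-network.
-/

lemma Finset.headI_sort_mem {α : Type*} [LinearOrder α] [Inhabited α] {s : Finset α}
    (hs : s.Nonempty) : (s.sort (· ≤ ·)).headI ∈ s := by
  rcases h : s.sort (· ≤ ·) with _ | ⟨a, l⟩
  · obtain ⟨a, ha⟩ := hs
    rw [← Finset.mem_sort (· ≤ ·), h] at ha
    exact absurd ha List.not_mem_nil
  · rw [List.headI_cons, ← Finset.mem_sort (· ≤ ·), h]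
    exact List.mem_cons_self

namespace Net

variable {n : ℕ} {N M : Net n}

def IsArc (N : Net n) (e p x : ℕ) : Prop :=
  e ∈ N.E ∧ N.dir e = true ∧ N.tail e = p ∧ N.head e = x

def otherEnd (N : Net n) (e w : ℕ) : ℕ := if N.tail e = w then N.head e else N.tail e

lemma indeg_ne_zero_of_isArc {e p x : ℕ} (h : N.IsArc e p x) : N.indeg x ≠ 0 :=
  Finset.card_ne_zero_of_mem (Finset.mem_filter.2 ⟨h.1, h.2.1, h.2.2.2⟩)

lemma ustep_symm {a b : ℕ} : N.ustep a b → N.ustep b a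
  | ⟨e, he, hd, h⟩ => ⟨e, he, hd, h.symm⟩

lemma UndirConn.symm {a b : ℕ} (h : N.UndirConn a b) : N.UndirConn b a := by
  induction h with
  | refl => exact .refl
  | tail _ hs ih => exact .head (ustep_symm hs) ih

lemma TrivialClass.undir_ne {u : ℕ} (hT : N.TrivialClass u)
    (hloop : ∀ e ∈ N.E, N.tail e ≠ N.head e) :
    ∀ e ∈ N.E, N.dir e = false → N.tail e ≠ u ∧ N.head e ≠ u := by
  intro e he hd
  constructor
  · intro ht
    exact hloop e he (ht.trans (hT _ (.single ⟨e, he, hd, .inl ⟨ht, rfl⟩⟩)).symm)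
  · intro hh
    exact hloop e he ((hT _ (.single ⟨e, he, hd, .inr ⟨rfl, hh⟩⟩)).trans hh.symm)

lemma isRootNode_of_forall_outArc {w : ℕ} (hwV : w ∈ N.V)
    (hloop : ∀ e ∈ N.E, N.tail e ≠ N.head e)
    (h : ∀ e ∈ N.incE w, N.dir e = true ∧ N.tail e = w) :
    N.IsRootNode w ∧ N.deg w = (N.incE w).card := by
  have hin : N.indeg w = 0 := Finset.card_eq_zero.2 <| Finset.filter_eq_empty_iff.2
    fun e he ⟨_, hh⟩ => hloop e he ((h e (Finset.mem_filter.2 ⟨he, .inr hh⟩)).2.trans hh.symm)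
  have hun : N.undeg w = 0 := Finset.card_eq_zero.2 <| Finset.filter_eq_empty_iff.2
    fun e he ⟨hd, hor⟩ => by simp [(h e (Finset.mem_filter.2 ⟨he, hor⟩)).1] at hd
  have hout : N.E.filter (fun e => N.dir e = true ∧ N.tail e = w) = N.incE w := by
    ext e
    simp only [incE, Finset.mem_filter]
    exact ⟨fun ⟨he, _, ht⟩ => ⟨he, .inl ht⟩,
      fun ⟨he, hor⟩ => ⟨he, h e (Finset.mem_filter.2 ⟨he, hor⟩)⟩⟩
  exact ⟨⟨hwV, hin, hun⟩, by rw [deg, hin, hun, outdeg, hout, zero_add, add_zero]⟩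

lemma not_resolved_of_suppressible {w : ℕ} (h : N.Suppressible w) :
    ¬ (N.IsRootNode w ∧ N.deg w = 2) := by
  rcases h.2 with ⟨-, hroot⟩ | ⟨h1, -⟩
  · exact fun h => hroot h.1
  · exact fun h => by omega

lemma mem_incE_iff_of_sort_eq {w : ℕ} {l : List ℕ} (hs : (N.incE w).sort (· ≤ ·) = l)
    {e : ℕ} : e ∈ N.incE w ↔ e ∈ l := by
  rw [← hs, Finset.mem_sort]

lemma exists_other_of_sort_eq_pair {w e₁ e₂ ez : ℕ} (hs : (N.incE w).sort (· ≤ ·) = [e₁, e₂])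
    (hez : ez ∈ N.incE w) :
    ∃ g, ez ≠ g ∧
      ((N.incE w).sort (· ≤ ·) = [ez, g] ∨ (N.incE w).sort (· ≤ ·) = [g, ez]) ∧
      ∀ f, f ∈ N.incE w ↔ f = ez ∨ f = g := by
  have hnd := Finset.sort_nodup (N.incE w) (· ≤ ·)
  rw [hs, List.nodup_cons, List.mem_singleton] at hnd
  rcases List.mem_pair.1 ((mem_incE_iff_of_sort_eq hs).1 hez) with rfl | rfl
  · exact ⟨e₂, hnd.1, .inl hs, fun f => by rw [mem_incE_iff_of_sort_eq hs, List.mem_pair]⟩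
  · exact ⟨e₁, Ne.symm hnd.1, .inr hs,
      fun f => by rw [mem_incE_iff_of_sort_eq hs, List.mem_pair, or_comm]⟩

lemma suppress_eq_replaceEdge {w ez g : ℕ}
    (hs : (N.incE w).sort (· ≤ ·) = [ez, g] ∨ (N.incE w).sort (· ≤ ·) = [g, ez])
    (hez : N.dir ez = true ∧ N.tail ez = w) (hg : ¬ (N.dir g = true ∧ N.tail g = w)) :
    N.suppress w = N.replaceEdge w ez g (N.otherEnd g w) (N.head ez) true ∨
      N.suppress w = N.replaceEdge w g ez (N.otherEnd g w) (N.head ez) true := by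
  rcases hs with hs | hs
  · left
    simp only [suppress, hs, if_pos hez, if_pos hez.2, otherEnd]
  · right
    simp only [suppress, hs, if_neg hg, if_pos hez, if_pos hez.2, otherEnd]

structure WellFormed (N : Net n) : Prop where
  lbl_inj : ∀ x y, N.lbl x ≠ none → N.lbl x = N.lbl y → x = y
  tail_unlabelled : ∀ e ∈ N.E, N.lbl (N.tail e) = none
  head_unlabelled_of_undir : ∀ e ∈ N.E, N.dir e = false → N.lbl (N.head e) = none
  arc_unique : ∀ e e' p p' x, N.IsArc e p x → N.IsArc e' p' x → N.lbl x ≠ none → e = e'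
  tail_mem : ∀ e ∈ N.E, N.tail e ∈ N.V
  head_mem : ∀ e ∈ N.E, N.head e ∈ N.V
  tail_ne_head : ∀ e ∈ N.E, N.tail e ≠ N.head e

lemma IsLNetwork.tail_ne_head (hL : N.IsLNetwork) : ∀ e ∈ N.E, N.tail e ≠ N.head e := by
  intro e he h
  exact hL.acyclic [(e, true)] ⟨N.tail e, by simp,
    ⟨⟨he, fun _ => rfl, by simp [src]⟩, by simp [dst, chain, h]⟩, by simp, by simp⟩

lemma IsLNetwork.mem_V_of_lbl_ne_none (hL : N.IsLNetwork) {x : ℕ} (hx : N.lbl x ≠ none) :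
    x ∈ N.V :=
  by_contra fun h => hx (hL.lblV x h)

lemma IsLNetwork.lbl_eq_none (hL : N.IsLNetwork) {x : ℕ} (hx : x ∈ N.V)
    (h : ¬ N.IsLeafNode x) : N.lbl x = none :=
  Option.not_isSome_iff_eq_none.1 fun hs => h ((hL.lblLeaf x hx).1 hs)

lemma Good.wellFormed (hN : N.Good) : N.WellFormed := by
  obtain ⟨hL, -, hC⟩ := hN
  refine
    { lbl_inj := fun x y hx hxy => ?_
      tail_unlabelled := fun e he => hL.lbl_eq_none (hL.wfT e he) fun hleaf => ?_
      head_unlabelled_of_undir := fun e he hd =>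
        hL.lbl_eq_none (hL.wfH e he) (hC.1 e he hd).2
      arc_unique := fun e e' p p' x ha ha' hx => ?_
      tail_mem := hL.wfT
      head_mem := hL.wfH
      tail_ne_head := hL.tail_ne_head }
  · have hy : N.lbl y ≠ none := hxy ▸ hx
    exact hL.lblInj x (hL.mem_V_of_lbl_ne_none hx) y (hL.mem_V_of_lbl_ne_none hy) hx hxy
  · cases hd : N.dir e
    · exact (hC.1 e he hd).1 hleaf
    · exact Finset.card_ne_zero_of_mem (Finset.mem_filter.2 ⟨he, hd, rfl⟩) hleaf.2.1
  · have hxV := hL.mem_V_of_lbl_ne_none hx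
    have hleaf : N.IsLeafNode x := (hL.lblLeaf x hxV).1 (Option.ne_none_iff_isSome.1 hx)
    exact Finset.card_le_one.1 (hL.leavesTree x hleaf) e
      (Finset.mem_filter.2 ⟨ha.1, ha.2.1, ha.2.2.2⟩) e'
      (Finset.mem_filter.2 ⟨ha'.1, ha'.2.1, ha'.2.2.2⟩)

namespace WellFormed

variable (hW : N.WellFormed)
include hW

lemma labelNode_eq {a : Fin n} {x : ℕ} (hx : N.HasLeaf a x) : N.labelNode a = x := by
  have hfil : N.V.filter (fun z => N.lbl z = some a) = {x} := by
    ext z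
    simp only [Finset.mem_filter, Finset.mem_singleton]
    refine ⟨fun ⟨_, hz⟩ => hW.lbl_inj z x (by simp [hz]) (by rw [hz, hx.2]), ?_⟩
    rintro rfl
    exact hx
  rw [labelNode, hfil, Finset.sort_singleton, List.headI_cons]

lemma parentOf_eq {e p x : ℕ} (he : N.IsArc e p x) (hx : N.lbl x ≠ none) :
    N.parentOf x = p := by
  have hin : N.inEdges x = {e} := by
    refine Finset.eq_singleton_iff_unique_mem.2
      ⟨Finset.mem_filter.2 ⟨he.1, he.2.1, he.2.2.2⟩, fun e' he' => ?_⟩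
    obtain ⟨he'E, hd, hh⟩ := Finset.mem_filter.1 he'
    exact hW.arc_unique e' e _ p x ⟨he'E, hd, rfl, hh⟩ he hx
  rw [parentOf, hin, Finset.sort_singleton, List.headI_cons, he.2.2.1]

end WellFormed

def EdgeKept (N M : Net n) (e : ℕ) : Prop :=
  e ∈ N.E ∧ e ∈ M.E ∧ M.tail e = N.tail e ∧ M.head e = N.head e ∧ M.dir e = N.dir e

lemma EdgeKept.isArc_iff {e p x : ℕ} (h : EdgeKept N M e) :
    M.IsArc e p x ↔ N.IsArc e p x := by
  obtain ⟨hN, hM, ht, hh, hd⟩ := h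
  simp only [IsArc, ht, hh, hd, hN, hM, true_and]

lemma edgeKept_replaceEdge {w en er q ζ e : ℕ} {d : Bool} (he : e ∈ N.E) (hen : e ≠ en)
    (her : e ≠ er) : EdgeKept N (N.replaceEdge w en er q ζ d) e :=
  ⟨he, Finset.mem_erase.2 ⟨her, he⟩, Function.update_of_ne hen _ _,
    Function.update_of_ne hen _ _, Function.update_of_ne hen _ _⟩

structure AgreesAwayFrom (N M : Net n) (w : ℕ) : Prop where
  lbl_eq : M.lbl = N.lbl
  mem_V : ∀ z ∈ N.V, z ≠ w → z ∈ M.V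
  isArc : ∀ e p x, N.IsArc e p x → p ≠ w → x ≠ w → M.IsArc e p x
  isArc_into : ∀ e p x, N.IsArc e p x → x ≠ w → N.lbl x = none → ∃ p', M.IsArc e p' x

lemma AgreesAwayFrom.refl (N : Net n) (w : ℕ) : AgreesAwayFrom N N w :=
  ⟨rfl, fun _ hz _ => hz, fun _ _ _ ha _ _ => ha, fun _ p _ ha _ _ => ⟨p, ha⟩⟩

lemma agreesAwayFrom_replaceEdge {w en er q ζ : ℕ} {d : Bool}
    (hinc : ∀ e ∈ N.E, (N.tail e = w ∨ N.head e = w) ↔ (e = en ∨ e = er))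
    (hout : ∀ e p x, (e = en ∨ e = er) → N.IsArc e p x → x ≠ w → N.lbl x ≠ none) :
    AgreesAwayFrom N (N.replaceEdge w en er q ζ d) w := by
  refine ⟨rfl, fun z hz hzw => Finset.mem_erase.2 ⟨hzw, hz⟩, fun e p x ha hp hx => ?_,
    fun e p x ha hx hxl => ⟨p, ?_⟩⟩
  · have h := not_or.1 fun h' => ((hinc e ha.1).2 h').elim (ha.2.2.1 ▸ hp) (ha.2.2.2 ▸ hx)
    exact (edgeKept_replaceEdge ha.1 h.1 h.2).isArc_iff.2 ha
  · have h := not_or.1 fun h' => hout e p x h' ha hx hxl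
    exact (edgeKept_replaceEdge ha.1 h.1 h.2).isArc_iff.2 ha

structure StuckPair (N : Net n) (u v hi he : ℕ) : Prop extends N.WellFormed where
  ne : hi ≠ he
  arc_i : N.IsArc hi u v
  arc_e : N.IsArc he u v
  head_eq_of_arc : ∀ e x, N.IsArc e u x → x = v
  undir_ne : ∀ e ∈ N.E, N.dir e = false → N.tail e ≠ u ∧ N.head e ≠ u

lemma Good.stuckPair (hN : N.Good) {u v hi he : ℕ} (hne : hi ≠ he) (hai : N.IsArc hi u v)
    (hae : N.IsArc he u v) (hout : N.outdeg u = 2)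
    (hundir : ∀ e ∈ N.E, N.dir e = false → N.tail e ≠ u ∧ N.head e ≠ u) :
    N.StuckPair u v hi he := by
  have hsub : {hi, he} ⊆ N.E.filter (fun e => N.dir e = true ∧ N.tail e = u) := by
    simp only [Finset.insert_subset_iff, Finset.singleton_subset_iff, Finset.mem_filter]
    exact ⟨⟨hai.1, hai.2.1, hai.2.2.1⟩, ⟨hae.1, hae.2.1, hae.2.2.1⟩⟩
  have hsub_eq :=
    Finset.eq_of_subset_of_card_le hsub (by rw [Finset.card_pair hne]; exact hout.le)
  refine
    { hN.wellFormed with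
      ne := hne
      arc_i := hai
      arc_e := hae
      head_eq_of_arc := fun e x ha => ?_
      undir_ne := hundir }
  have : e ∈ ({hi, he} : Finset ℕ) := hsub_eq ▸ Finset.mem_filter.2 ⟨ha.1, ha.2.1, ha.2.2.1⟩
  rcases Finset.mem_insert.1 this with rfl | h
  · exact ha.2.2.2.symm.trans hai.2.2.2
  · rw [Finset.mem_singleton.1 h] at ha
    exact ha.2.2.2.symm.trans hae.2.2.2

namespace StuckPair

variable {u v hi he : ℕ} (I : N.StuckPair u v hi he)
include I

lemma lbl_u : N.lbl u = none := I.arc_i.2.2.1 ▸ I.tail_unlabelled hi I.arc_i.1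

lemma lbl_v : N.lbl v = none := by
  by_contra hv
  exact I.ne (I.arc_unique hi he u u v I.arc_i I.arc_e hv)

lemma u_ne_v : u ≠ v := I.arc_i.2.2.1 ▸ I.arc_i.2.2.2 ▸ I.tail_ne_head hi I.arc_i.1

lemma ne_u_of_isArc {e w x : ℕ} (ha : N.IsArc e w x) (hx : N.lbl x ≠ none) : w ≠ u := by
  rintro rfl
  exact hx (I.head_eq_of_arc e x ha ▸ I.lbl_v)

lemma three_le_card_incE {e x : ℕ} (ha : N.IsArc e v x) : 3 ≤ (N.incE v).card := by
  have hne : ∀ f, N.IsArc f u v → f ≠ e := by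
    rintro f hf rfl
    exact I.u_ne_v (hf.2.2.1.symm.trans ha.2.2.1)
  have hsub : {hi, he, e} ⊆ N.incE v := by
    simp only [Finset.insert_subset_iff, Finset.singleton_subset_iff, incE, Finset.mem_filter]
    exact ⟨⟨I.arc_i.1, .inr I.arc_i.2.2.2⟩, ⟨I.arc_e.1, .inr I.arc_e.2.2.2⟩, ha.1, .inl ha.2.2.1⟩
  calc 3 = ({hi, he, e} : Finset ℕ).card := by
        rw [Finset.card_insert_of_notMem, Finset.card_pair (hne he I.arc_e)]
        simp only [Finset.mem_insert, Finset.mem_singleton, not_or]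
        exact ⟨I.ne, hne hi I.arc_i⟩
    _ ≤ _ := Finset.card_le_card hsub

lemma otherEnd_spec {w g : ℕ} (hwv : w ≠ v) (hg : g ∈ N.E)
    (hinc : N.tail g = w ∨ N.head g = w) (hout : ¬ (N.dir g = true ∧ N.tail g = w)) :
    N.lbl (N.otherEnd g w) = none ∧ N.otherEnd g w ≠ u ∧ N.otherEnd g w ≠ w ∧
      N.otherEnd g w ∈ N.V := by
  unfold otherEnd
  by_cases ht : N.tail g = w
  · have hd : N.dir g = false := by simpa [ht] using hout
    rw [if_pos ht]
    exact ⟨I.head_unlabelled_of_undir g hg hd, (I.undir_ne g hg hd).2,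
      fun h => I.tail_ne_head g hg (ht.trans h.symm), I.head_mem g hg⟩
  · rw [if_neg ht]
    refine ⟨I.tail_unlabelled g hg, fun hu => ?_, ht, I.tail_mem g hg⟩
    cases hd : N.dir g
    · exact (I.undir_ne g hg hd).1 hu
    · exact hwv ((hinc.resolve_left ht).symm.trans (I.head_eq_of_arc g _ ⟨hg, hd, hu, rfl⟩))

lemma of_edgeKept (hlbl : ∀ z, M.lbl z = none ∨ M.lbl z = N.lbl z)
    (hmem : ∀ e ∈ M.E, M.tail e ∈ M.V ∧ M.head e ∈ M.V)
    (hpair : EdgeKept N M hi ∧ EdgeKept N M he)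
    (hedge : ∀ e ∈ M.E, EdgeKept N M e ∨ ∃ q x, M.IsArc e q x ∧ q ≠ u ∧ M.lbl q = none ∧
      M.lbl x ≠ none ∧ ∀ e' q', M.IsArc e' q' x → e' = e) :
    M.StuckPair u v hi he := by
  have lbl_eq : ∀ z, M.lbl z ≠ none → N.lbl z = M.lbl z :=
    fun z hz => ((hlbl z).resolve_left hz).symm
  have unl : ∀ z, N.lbl z = none → M.lbl z = none :=
    fun z hz => (hlbl z).elim id (·.trans hz)
  refine
    { lbl_inj := fun x y hx hxy => I.lbl_inj x y (by rwa [lbl_eq x hx])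
        (by rw [lbl_eq x hx, hxy, lbl_eq y (hxy ▸ hx)])
      tail_unlabelled := fun e he => ?_
      head_unlabelled_of_undir := fun e he hd => ?_
      arc_unique := fun e e' p p' x ha ha' hx => ?_
      tail_mem := fun e he => (hmem e he).1
      head_mem := fun e he => (hmem e he).2
      tail_ne_head := fun e he => ?_
      ne := I.ne
      arc_i := hpair.1.isArc_iff.2 I.arc_i
      arc_e := hpair.2.isArc_iff.2 I.arc_e
      head_eq_of_arc := fun e x ha => ?_
      undir_ne := fun e he hd => ?_ }
  all_goals rcases hedge e (by first | assumption | exact ha.1) with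
    hk | ⟨q, y, hqy, hqu, hq, hy, huniq⟩
  · rw [hk.2.2.1]; exact unl _ (I.tail_unlabelled e hk.1)
  · rw [hqy.2.2.1]; exact hq
  · rw [hk.2.2.2.1]; exact unl _ (I.head_unlabelled_of_undir e hk.1 (hk.2.2.2.2 ▸ hd))
  · exact absurd hqy.2.1 (by simp [hd])
  · rcases hedge e' ha'.1 with hk' | ⟨q', y', hqy', -, -, -, huniq'⟩
    · exact I.arc_unique e e' p p' x (hk.isArc_iff.1 ha) (hk'.isArc_iff.1 ha')
        (by rwa [lbl_eq x hx])
    · exact huniq' e p (ha'.2.2.2.symm.trans hqy'.2.2.2 ▸ ha)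
  · exact (huniq e' p' (ha.2.2.2.symm.trans hqy.2.2.2 ▸ ha')).symm
  · rw [hk.2.2.1, hk.2.2.2.1]; exact I.tail_ne_head e hk.1
  · rw [hqy.2.2.1, hqy.2.2.2]; exact fun h => hy (h ▸ hq)
  · exact I.head_eq_of_arc e x (hk.isArc_iff.1 ha)
  · exact absurd (hqy.2.2.1.symm.trans ha.2.2.1) hqu
  · rw [hk.2.2.1, hk.2.2.2.1]; exact I.undir_ne e hk.1 (hk.2.2.2.2 ▸ hd)
  · exact absurd hqy.2.1 (by simp [hd])

lemma of_removeNode {x : ℕ} (hxu : x ≠ u) (hxv : x ≠ v)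
    (hV : M.V = N.V.erase x) (hE : M.E = N.E \ N.incE x)
    (ht : M.tail = N.tail) (hh : M.head = N.head) (hd : M.dir = N.dir)
    (hlbl : ∀ z, M.lbl z = none ∨ M.lbl z = N.lbl z) : M.StuckPair u v hi he := by
  have hmemE : ∀ e, e ∈ M.E ↔ e ∈ N.E ∧ N.tail e ≠ x ∧ N.head e ≠ x := by
    intro e
    rw [hE, Finset.mem_sdiff, incE, Finset.mem_filter]
    tauto
  have hkept : ∀ e, e ∈ M.E → EdgeKept N M e := fun e he =>
    ⟨((hmemE e).1 he).1, he, by rw [ht], by rw [hh], by rw [hd]⟩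
  have hpair : ∀ e, N.IsArc e u v → EdgeKept N M e := fun e ha =>
    hkept e ((hmemE e).2 ⟨ha.1, ha.2.2.1 ▸ hxu.symm, ha.2.2.2 ▸ hxv.symm⟩)
  refine I.of_edgeKept hlbl (fun e he => ?_) ⟨hpair hi I.arc_i, hpair he I.arc_e⟩
    (fun e he => .inl (hkept e he))
  obtain ⟨heN, htx, hhx⟩ := (hmemE e).1 he
  rw [hV, ht, hh]
  exact ⟨Finset.mem_erase.2 ⟨htx, I.tail_mem e heN⟩, Finset.mem_erase.2 ⟨hhx, I.head_mem e heN⟩⟩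

lemma deleteLeaf {x : ℕ} (hx : N.lbl x ≠ none) : (N.deleteLeaf x).StuckPair u v hi he := by
  refine I.of_removeNode (by rintro rfl; exact hx I.lbl_u) (by rintro rfl; exact hx I.lbl_v)
    rfl rfl rfl rfl rfl fun z => ?_
  by_cases hz : z = x
  · exact .inl (by simp [Net.deleteLeaf, hz])
  · exact .inr (Function.update_of_ne hz _ _)

lemma eraseEdge {e₀ : ℕ} (h₀ : N.tail e₀ ≠ u) :
    ({ N with E := N.E.erase e₀ } : Net n).StuckPair u v hi he := by
  have hkept : ∀ e ∈ N.E, e ≠ e₀ → EdgeKept N { N with E := N.E.erase e₀ } e :=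
    fun e he hne => ⟨he, Finset.mem_erase.2 ⟨hne, he⟩, rfl, rfl, rfl⟩
  have hne : ∀ e, N.IsArc e u v → e ≠ e₀ := by
    rintro e ha rfl
    exact h₀ ha.2.2.1
  refine I.of_edgeKept (fun _ => .inr rfl)
    (fun e he => ⟨I.tail_mem e (Finset.mem_of_mem_erase he),
      I.head_mem e (Finset.mem_of_mem_erase he)⟩)
    ⟨hkept hi I.arc_i.1 (hne hi I.arc_i), hkept he I.arc_e.1 (hne he I.arc_e)⟩
    (fun e he => .inl (hkept e (Finset.mem_of_mem_erase he) (Finset.ne_of_mem_erase he)))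

lemma replaceEdge {w en er q ζ : ℕ}
    (hinc : ∀ e ∈ N.E, (N.tail e = w ∨ N.head e = w) ↔ (e = en ∨ e = er))
    (hen : en ∈ N.E) (hner : en ≠ er) (hwu : w ≠ u) (hwv : w ≠ v)
    (hq : N.lbl q = none) (hqu : q ≠ u) (hqw : q ≠ w) (hqV : q ∈ N.V)
    (hζ : ∃ e p, (e = en ∨ e = er) ∧ N.IsArc e p ζ) (hζl : N.lbl ζ ≠ none) (hζw : ζ ≠ w) :
    (N.replaceEdge w en er q ζ true).StuckPair u v hi he := by
  set M := N.replaceEdge w en er q ζ true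
  have hkept : ∀ e ∈ M.E, e ≠ en → EdgeKept N M e := fun e he hne =>
    edgeKept_replaceEdge (Finset.mem_erase.1 he).2 hne (Finset.mem_erase.1 he).1
  have hpair : ∀ e, N.IsArc e u v → EdgeKept N M e := fun e ha =>
    have h := not_or.1 fun h' => ((hinc e ha.1).2 h').elim (ha.2.2.1 ▸ hwu.symm)
      (ha.2.2.2 ▸ hwv.symm)
    edgeKept_replaceEdge ha.1 h.1 h.2
  have hnew : M.IsArc en q ζ :=
    ⟨Finset.mem_erase.2 ⟨hner, hen⟩, Function.update_self .., Function.update_self ..,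
      Function.update_self ..⟩
  obtain ⟨e₀, p₀, he₀, ha₀⟩ := hζ
  have hsole : ∀ e' q', M.IsArc e' q' ζ → e' = en := by
    intro e' q' ha
    by_contra hne
    have := I.arc_unique e' e₀ q' p₀ ζ ((hkept e' ha.1 hne).isArc_iff.1 ha) ha₀ hζl
    exact he₀.elim (fun h => hne (this.trans h)) fun h => (Finset.mem_erase.1 ha.1).1 (this.trans h)
  refine I.of_edgeKept (fun _ => .inr rfl) (fun e he => ?_) ⟨hpair hi I.arc_i, hpair he I.arc_e⟩
    fun e he => ?_
  · by_cases hne : e = en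
    · rw [hne, hnew.2.2.1, hnew.2.2.2]
      exact ⟨Finset.mem_erase.2 ⟨hqw, hqV⟩,
        Finset.mem_erase.2 ⟨hζw, ha₀.2.2.2 ▸ I.head_mem e₀ ha₀.1⟩⟩
    · obtain ⟨her, heN⟩ := Finset.mem_erase.1 he
      have hnot := not_or.1 fun h => ((hinc e heN).1 h).elim hne her
      obtain ⟨-, -, ht, hh, -⟩ := hkept e he hne
      rw [ht, hh]
      exact ⟨Finset.mem_erase.2 ⟨hnot.1, I.tail_mem e heN⟩,
        Finset.mem_erase.2 ⟨hnot.2, I.head_mem e heN⟩⟩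
  · by_cases hne : e = en
    · exact .inr ⟨q, ζ, hne ▸ hnew, hqu, hq, hζl, hne ▸ hsole⟩
    · exact .inl (hkept e he hne)

lemma suppress_of_sort_eq_singleton {w ez ζ e : ℕ} (hez : N.IsArc ez w ζ)
    (hζ : N.lbl ζ ≠ none) (hs : (N.incE w).sort (· ≤ ·) = [e]) :
    (N.suppress w).StuckPair u v hi he ∧ AgreesAwayFrom N (N.suppress w) w := by
  have hez_inc : ez ∈ N.incE w := Finset.mem_filter.2 ⟨hez.1, .inl hez.2.2.1⟩
  have hinc : N.incE w = {ez} := by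
    refine Finset.eq_singleton_iff_unique_mem.2 ⟨hez_inc, fun f hf => ?_⟩
    rw [mem_incE_iff_of_sort_eq hs, List.mem_singleton] at hf
    rw [hf, List.mem_singleton.1 ((mem_incE_iff_of_sort_eq hs).1 hez_inc)]
  have hwv : w ≠ v := by
    rintro rfl
    have := I.three_le_card_incE hez
    rw [hinc, Finset.card_singleton] at this
    omega
  have hsup : N.suppress w = { N with V := N.V.erase w, E := N.E.erase ez } := by
    simp only [suppress, hinc, Finset.sort_singleton]
  rw [hsup]
  refine ⟨I.of_removeNode (I.ne_u_of_isArc hez hζ) hwv rfl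
      (by rw [hinc, Finset.sdiff_singleton_eq_erase]) rfl rfl rfl fun _ => .inr rfl,
    ⟨rfl, fun z hz hzw => Finset.mem_erase.2 ⟨hzw, hz⟩, fun f p x ha hp _ => ?_,
      fun f p x ha _ hx => ⟨p, ?_⟩⟩⟩
  · refine ⟨Finset.mem_erase.2 ⟨?_, ha.1⟩, ha.2⟩
    rintro rfl
    exact hp (ha.2.2.1.symm.trans hez.2.2.1)
  · refine ⟨Finset.mem_erase.2 ⟨?_, ha.1⟩, ha.2⟩
    rintro rfl
    exact hζ (ha.2.2.2.symm.trans hez.2.2.2 ▸ hx)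

lemma suppress_of_sort_eq_pair {w ez ζ e₁ e₂ : ℕ} (hwV : w ∈ N.V)
    (hez : N.IsArc ez w ζ) (hζ : N.lbl ζ ≠ none) (hres : ¬ (N.IsRootNode w ∧ N.deg w = 2))
    (hs : (N.incE w).sort (· ≤ ·) = [e₁, e₂]) :
    (N.suppress w).StuckPair u v hi he ∧ AgreesAwayFrom N (N.suppress w) w := by
  obtain ⟨g, hgez, hs', hinc⟩ :=
    exists_other_of_sort_eq_pair hs (Finset.mem_filter.2 ⟨hez.1, .inl hez.2.2.1⟩)
  have hcard : (N.incE w).card = 2 := by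
    rw [← Finset.length_sort (· ≤ ·), hs]
    rfl
  have hwv : w ≠ v := by
    rintro rfl
    have := I.three_le_card_incE hez
    omega
  obtain ⟨hgE, hg_inc⟩ := Finset.mem_filter.1 ((hinc g).2 (.inr rfl))
  -- were `g` also leaving `w`, then `w` would be a root of degree 2
  have hg : ¬ (N.dir g = true ∧ N.tail g = w) := fun hgo => hres <| hcard ▸
    isRootNode_of_forall_outArc hwV I.tail_ne_head fun f hf =>
      ((hinc f).1 hf).elim (fun h => h ▸ ⟨hez.2.1, hez.2.2.1⟩) fun h => h ▸ hgo
  obtain ⟨hq, hqu, hqw, hqV⟩ := I.otherEnd_spec hwv hgE hg_inc hg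
  have hinc' : ∀ f ∈ N.E, (N.tail f = w ∨ N.head f = w) ↔ (f = ez ∨ f = g) := fun f hf =>
    (and_iff_right hf).symm.trans (Finset.mem_filter.symm.trans (hinc f))
  have hout : ∀ f p x, (f = ez ∨ f = g) → N.IsArc f p x → x ≠ w → N.lbl x ≠ none := by
    rintro f p x (rfl | rfl) ha hx
    · exact ha.2.2.2.symm.trans hez.2.2.2 ▸ hζ
    · exact absurd ⟨ha.2.1, hg_inc.resolve_right (ha.2.2.2 ▸ hx)⟩ hg
  obtain ⟨hezE, hezd, hezt, rfl⟩ := hez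
  have hζw : N.head ez ≠ w := fun h => I.tail_ne_head ez hezE (hezt.trans h.symm)
  have hwu : w ≠ u := I.ne_u_of_isArc ⟨hezE, hezd, hezt, rfl⟩ hζ
  rcases suppress_eq_replaceEdge hs' ⟨hezd, hezt⟩ hg with h | h <;> rw [h]
  · exact ⟨I.replaceEdge hinc' hezE hgez hwu hwv hq hqu hqw hqV
      ⟨ez, w, .inl rfl, hezE, hezd, hezt, rfl⟩ hζ hζw, agreesAwayFrom_replaceEdge hinc' hout⟩
  · have hinc'' := fun f hf => (hinc' f hf).trans or_comm
    exact ⟨I.replaceEdge hinc'' hgE hgez.symm hwu hwv hq hqu hqw hqV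
      ⟨ez, w, .inr rfl, hezE, hezd, hezt, rfl⟩ hζ hζw,
      agreesAwayFrom_replaceEdge hinc'' fun f p x hf => hout f p x hf.symm⟩

lemma suppress {w ez ζ : ℕ} (hwV : w ∈ N.V) (hez : N.IsArc ez w ζ) (hζ : N.lbl ζ ≠ none)
    (hres : ¬ (N.IsRootNode w ∧ N.deg w = 2)) :
    (N.suppress w).StuckPair u v hi he ∧ AgreesAwayFrom N (N.suppress w) w := by
  rcases hs : (N.incE w).sort (· ≤ ·) with _ | ⟨e₁, _ | ⟨e₂, _ | ⟨e₃, l⟩⟩⟩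
  · simp only [Net.suppress, hs]
    exact ⟨I, .refl N w⟩
  · exact I.suppress_of_sort_eq_singleton hez hζ hs
  · exact I.suppress_of_sort_eq_pair hwV hez hζ hres hs
  · simp only [Net.suppress, hs]
    exact ⟨I, .refl N w⟩

lemma suppressIf {w ez ζ : ℕ} (hwV : w ∈ N.V) (hez : N.IsArc ez w ζ) (hζ : N.lbl ζ ≠ none) :
    (N.suppressIf w).StuckPair u v hi he ∧ AgreesAwayFrom N (N.suppressIf w) w := by
  unfold Net.suppressIf
  split_ifs with hs
  · exact I.suppress hwV hez hζ (not_resolved_of_suppressible hs)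
  · exact ⟨I, .refl N w⟩

lemma reduceTree {a b : Fin n} (h : N.TreeCherry a b) : (N.reduceTree a b).StuckPair u v hi he := by
  obtain ⟨x, y, p, hax, hby, hxy, ⟨ex, hex⟩, ⟨ey, hey⟩⟩ := h
  have hxl : N.lbl x ≠ none := by simp [hax.2]
  have hyl : N.lbl y ≠ none := by simp [hby.2]
  have hpx : p ≠ x := fun h => hxl (h ▸ hex.2.2.1 ▸ I.tail_unlabelled ex hex.1)
  have hred : N.reduceTree a b = (N.deleteLeaf x).suppressIf p := by
    simp only [Net.reduceTree, I.labelNode_eq hax, I.parentOf_eq hex hxl]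
  have hey' : (N.deleteLeaf x).IsArc ey p y :=
    ⟨Finset.mem_sdiff.2 ⟨hey.1, fun hinc => (Finset.mem_filter.1 hinc).2.elim
      (fun h => hpx (hey.2.2.1.symm.trans h)) fun h => hxy (h.symm.trans hey.2.2.2)⟩, hey.2⟩
  have hyl' : (N.deleteLeaf x).lbl y ≠ none := by
    show Function.update N.lbl x none y ≠ none
    rwa [Function.update_of_ne (Ne.symm hxy)]
  rw [hred]
  exact ((I.deleteLeaf hxl).suppressIf
    (Finset.mem_erase.2 ⟨hpx, hex.2.2.1 ▸ I.tail_mem ex hex.1⟩) hey' hyl').1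

lemma reduceRet {a b : Fin n} (h : N.RetCherry a b) : (N.reduceRet a b).StuckPair u v hi he := by
  obtain ⟨x, y, pa, pb, hax, hby, -, ⟨eax, hxa⟩, hhyb, ⟨eby, hyb⟩, ⟨eba, hab⟩⟩ := h
  have hxl : N.lbl x ≠ none := by simp [hax.2]
  have hyl : N.lbl y ≠ none := by simp [hby.2]
  have hpa : N.lbl pa = none := hxa.2.2.1 ▸ I.tail_unlabelled eax hxa.1
  have hpb : N.lbl pb = none := hyb.2.2.1 ▸ I.tail_unlabelled eby hyb.1
  set eint := ((N.E.filter (fun e => N.dir e = true ∧ N.tail e = pb ∧ N.head e = pa)).sort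
    (· ≤ ·)).headI
  have hint : N.IsArc eint pb pa :=
    Finset.mem_filter.1 (Finset.headI_sort_mem ⟨eba, Finset.mem_filter.2 hab⟩)
  set N₁ : Net n := { N with E := N.E.erase eint }
  have hred : N.reduceRet a b = (N₁.suppressIf pb).suppress pa := by
    simp only [Net.reduceRet, I.labelNode_eq hax, I.labelNode_eq hby, I.parentOf_eq hxa hxl,
      I.parentOf_eq hyb hyl]
    rfl
  have arc₁ : ∀ {e p z}, N.IsArc e p z → N.lbl z ≠ none → N₁.IsArc e p z := fun ha hz =>
    ⟨Finset.mem_erase.2 ⟨fun h => hz (by rw [← ha.2.2.2, h, hint.2.2.2, hpa]), ha.1⟩, ha.2⟩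
  have hpapb : pa ≠ pb := fun h => I.tail_ne_head eba hab.1 (hab.2.2.1.trans (h ▸ hab.2.2.2).symm)
  obtain ⟨I₂, A₂⟩ := (I.eraseEdge (hint.2.2.1 ▸ I.ne_u_of_isArc hyb hyl)).suppressIf
    (hyb.2.2.1 ▸ I.tail_mem eby hyb.1) (arc₁ hyb hyl) hyl
  -- the second parent arc `g` of the hybrid `pa` survives, so `pa` is not a root
  obtain ⟨g, hg, hgint⟩ := Finset.exists_mem_ne hhyb eint
  obtain ⟨hgE, hgd, hgh⟩ := Finset.mem_filter.1 hg
  obtain ⟨p', hg₂⟩ := A₂.isArc_into g _ pa ⟨Finset.mem_erase.2 ⟨hgint, hgE⟩, hgd, rfl, hgh⟩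
    hpapb hpa
  rw [hred]
  exact (I₂.suppress (A₂.mem_V pa (hxa.2.2.1 ▸ I.tail_mem eax hxa.1) hpapb)
    (A₂.isArc eax pa x (arc₁ hxa hxl) hpapb fun h => hxl (h ▸ hpb))
    (by rw [A₂.lbl_eq]; exact hxl) fun h => indeg_ne_zero_of_isArc hg₂ h.1.2.1).1

lemma reduceCherry (a b : Fin n) : (N.reduceCherry a b).StuckPair u v hi he := by
  unfold Net.reduceCherry
  split_ifs with hT hR
  · exact I.reduceTree hT
  · exact I.reduceRet hR
  · exact I

omit I in
lemma reduceSeq (I : N.StuckPair u v hi he) (S : List (Fin n × Fin n)) :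
    (N.reduceSeq S).StuckPair u v hi he := by
  induction S generalizing N with
  | nil => exact I
  | cons s S ih => exact ih (I.reduceCherry s.1 s.2)

end StuckPair

lemma Orchard.not_stuckPair (hO : N.Orchard) {u v hi he : ℕ} : ¬ N.StuckPair u v hi he := by
  obtain ⟨S, L₀, -, hE, -⟩ := hO
  intro I
  simpa [hE] using (I.reduceSeq S).arc_i.1

lemma Good.unresolvedRC_of_trivialClass (hN : N.Good) (hO : N.Orchard) {u v hi he : ℕ}
    (hT : N.TrivialClass u) (hne : hi ≠ he) (hiE : hi ∈ N.E) (heE : he ∈ N.E)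
    (hti : N.tail hi = u) (hhi : N.head hi = v) (hte : N.tail he = u) (hhe : N.head he = v) :
    N.UnresolvedRC u := by
  have hundir := hT.undir_ne hN.1.tail_ne_head
  have arc : ∀ e ∈ N.E, N.tail e = u → N.head e = v → N.IsArc e u v := fun e he ht hh =>
    ⟨he, by simpa using fun hd => (hundir e he hd).1 ht, ht, hh⟩
  have hundeg : N.undeg u = 0 := Finset.card_eq_zero.2 <| Finset.filter_eq_empty_iff.2
    fun e he ⟨hd, hor⟩ => hor.elim (hundir e he hd).1 (hundir e he hd).2
  have hout2 : 2 ≤ N.outdeg u := by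
    rw [← Finset.card_pair hne]
    refine Finset.card_le_card ?_
    simp only [Finset.insert_subset_iff, Finset.singleton_subset_iff, Finset.mem_filter]
    exact ⟨⟨hiE, (arc hi hiE hti hhi).2.1, hti⟩, ⟨heE, (arc he heE hte hhe).2.1, hte⟩⟩
  have hout_ne : N.outdeg u ≠ 2 := fun h =>
    hO.not_stuckPair (hN.stuckPair hne (arc hi hiE hti hhi) (arc he heE hte hhe) h hundir)
  have huV : u ∈ N.V := hti ▸ hN.1.wfT hi hiE
  by_cases h0 : N.indeg u = 0
  · have hdeg := (hN.2.1 u huV).1 ⟨huV, h0, hundeg⟩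
    rw [deg, h0, hundeg] at hdeg
    refine ⟨⟨huV, fun e he hd hconn => indeg_ne_zero_of_isArc ⟨he, hd, rfl, hT _ hconn.symm⟩ h0⟩,
      .inr (by rw [deg, h0, hundeg]; omega)⟩
  · have hdeg := (hN.2.1 u huV).2.2 (fun h => h0 h.2.1) fun h => by have := h.2.1; omega
    rw [deg, hundeg] at hdeg
    omega

end Net

/-- Prop. 4, part 2: if an orchard `L`-network has parallel edges
`h_i`, `h_e` with common tail `u`, then `u` lies in an unresolved root component
`T`, and `h_i, h_e ∈ adm(T)`. -/
theorem stmt9 {n : ℕ} (N : Net n) (hN : N.Good) (hO : N.Orchard)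
    (hi he u v : ℕ) (hne : hi ≠ he) (hiE : hi ∈ N.E) (heE : he ∈ N.E)
    (hti : N.tail hi = u) (hhi : N.head hi = v)
    (hte : N.tail he = u) (hhe : N.head he = v) :
    N.UnresolvedRC u ∧ N.AdmFor u hi ∧ N.AdmFor u he := by
  refine ⟨?_, ⟨hiE, hti ▸ .refl⟩, ⟨heE, hte ▸ .refl⟩⟩
  by_cases hT : N.TrivialClass u
  · exact hN.unresolvedRC_of_trivialClass hO hT hne hiE heE hti hhi hte hhe
  · have huV : u ∈ N.V := hti ▸ hN.1.wfT hi hiE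
    exact ⟨⟨huV, hN.2.2.2 u huV hT⟩, .inl hT⟩

end
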